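/- arXiv:1201.3350 — 2 statements merged into one kernel-verified Lean document; each statement's English description precedes it below -/
import Mathlib

section
/- Along the P-positions of Rational Nim the heap-size ratio converges to (q₁+q₂)/(p₁+p₂): for every ε > 0 there exists N such that every P-position (A,B) of Rational Nim with A ≥ N satisfies |B/A − (q₁+q₂)/(p₁+p₂)| < ε. -/
/-! With `D = p₁q₂ - q₁p₂`, the numbers `u = A q₂ - B p₂` and `v = B p₁ - A q₁` are `D` times the
coordinates of `(A, B)` in the basis `(p₁, q₁), (p₂, q₂)`; `B_Q` is `u, v ≥ 0`, and the moves
`(s, 0)` and `(0, t)` lower `u` by `s D` or `v` by `t D`. So Rational Nim is two-heap Nim on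
`(⌊u / D⌋, ⌊v / D⌋)`, whose P-positions are those with equal heaps. Equal floors force
`|u - v| < D`, and `v - u = B (p₁ + p₂) - A (q₁ + q₂)`, so along P-positions `B / A` is within
`D / (A (p₁ + p₂))` of `(q₁ + q₂) / (p₁ + p₂)`. -/

/-- Membership in the set of allowed positions `B_Q`. -/
def inBQ (p1 q1 p2 q2 : ℕ) (pos : ℕ × ℕ) : Prop :=
  pos.1 * q1 ≤ pos.2 * p1 ∧ pos.2 * p2 ≤ pos.1 * q2

/-- Membership in the set `T_Q` (the inequalities are read in ℤ). -/
def inTQ (p1 q1 p2 q2 : ℕ) (pos : ℕ × ℕ) : Prop :=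
  inBQ p1 q1 p2 q2 pos ∧
    (p1 : ℤ) * ((pos.2 : ℤ) - (q2 : ℤ)) < (q1 : ℤ) * ((pos.1 : ℤ) - (p2 : ℤ)) ∧
    (p2 : ℤ) * ((pos.2 : ℤ) - (q1 : ℤ)) > (q2 : ℤ) * ((pos.1 : ℤ) - (p1 : ℤ))

/-- A legal move of the Q-subtraction game `G_Q(M)`. -/
def QMove (p1 q1 p2 q2 : ℕ) (M : Set (ℕ × ℕ)) (pos pos' : ℕ × ℕ) : Prop :=
  ∃ s t : ℕ, (s, t) ∈ M ∧
    p1 * s + p2 * t ≤ pos.1 ∧ q1 * s + q2 * t ≤ pos.2 ∧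
    pos'.1 = pos.1 - (p1 * s + p2 * t) ∧ pos'.2 = pos.2 - (q1 * s + q2 * t) ∧
    inBQ p1 q1 p2 q2 pos'

/-- `pos` is a P-position of the game with move relation `move`: every legal move
leads to a non-P-position.  (Every legal move of the games considered here strictly
decreases the coordinate sum, which makes the recursion well-founded.) -/
def PPos (move : ℕ × ℕ → ℕ × ℕ → Prop) : ℕ × ℕ → Prop
  | pos => ∀ pos', move pos pos' → pos'.1 + pos'.2 < pos.1 + pos.2 → ¬ PPos move pos'
termination_by pos => pos.1 + pos.2

/-- The move set of Rational Nim. -/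
def MRN : Set (ℕ × ℕ) := {m | ∃ t : ℕ, 1 ≤ t ∧ (m = (0, t) ∨ m = (t, 0))}

theorem pPos_iff_of_kernel {move : ℕ × ℕ → ℕ × ℕ → Prop} {S : Set (ℕ × ℕ)} {P : ℕ × ℕ → Prop}
    (closed : ∀ x ∈ S, ∀ y, move x y → y.1 + y.2 < x.1 + x.2 → y ∈ S)
    (stable : ∀ x ∈ S, P x → ∀ y, move x y → y.1 + y.2 < x.1 + x.2 → ¬ P y)
    (absorbing : ∀ x ∈ S, ¬ P x → ∃ y, move x y ∧ y.1 + y.2 < x.1 + x.2 ∧ P y) :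
    ∀ x ∈ S, PPos move x ↔ P x := by
  suffices ∀ n, ∀ x ∈ S, x.1 + x.2 = n → (PPos move x ↔ P x) from fun x hx => this _ x hx rfl
  intro n
  induction n using Nat.strong_induction_on with
  | _ n ih =>
  intro x hx rfl
  rw [PPos]
  constructor
  · intro hPPos
    by_contra hP
    obtain ⟨y, hmove, hlt, hPy⟩ := absorbing x hx hP
    exact hPPos y hmove hlt ((ih _ hlt y (closed x hx y hmove hlt) rfl).mpr hPy)
  · intro hP y hmove hlt hPPosy
    exact stable x hx hP y hmove hlt ((ih _ hlt y (closed x hx y hmove hlt) rfl).mp hPPosy)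

lemma Int.abs_sub_lt_of_ediv_eq {a b d : ℤ} (hd : 0 < d) (h : a / d = b / d) : |a - b| < d := by
  have ha := Int.lt_ediv_add_one_mul_self a hd
  have hb := Int.lt_ediv_add_one_mul_self b hd
  have ha' := Int.ediv_mul_le a hd.ne'
  have hb' := Int.ediv_mul_le b hd.ne'
  rw [h] at ha ha'
  rw [abs_sub_lt_iff]
  constructor <;> linarith

lemma abs_div_sub_div_lt {x y c d K ε : ℝ} (hd : 0 < d) (hε : 0 < ε)
    (hK : |y * d - x * c| ≤ K) (hx : K / (ε * d) < x) : |y / x - c / d| < ε := by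
  have hεd := mul_pos hε hd
  have hx0 : 0 < x := lt_of_le_of_lt (div_nonneg ((abs_nonneg _).trans hK) hεd.le) hx
  rw [div_lt_iff₀ hεd] at hx
  rw [div_sub_div _ _ hx0.ne' hd.ne', abs_div, abs_of_pos (mul_pos hx0 hd),
    div_lt_iff₀ (by positivity)]
  linarith

namespace RationalNim

def det (p1 q1 p2 q2 : ℕ) : ℤ := p1 * q2 - q1 * p2

def coords (p1 q1 p2 q2 : ℕ) (pos : ℕ × ℕ) : ℤ × ℤ :=
  (pos.1 * q2 - pos.2 * p2, pos.2 * p1 - pos.1 * q1)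

def heaps (p1 q1 p2 q2 : ℕ) (pos : ℕ × ℕ) : ℤ × ℤ :=
  ((coords p1 q1 p2 q2 pos).1 / det p1 q1 p2 q2, (coords p1 q1 p2 q2 pos).2 / det p1 q1 p2 q2)

variable {p1 q1 p2 q2 : ℕ}

lemma det_pos (hD : q1 * p2 < p1 * q2) : 0 < det p1 q1 p2 q2 := by
  simp only [det, sub_pos]; exact_mod_cast hD

lemma inBQ_iff_coords_nonneg (pos : ℕ × ℕ) :
    inBQ p1 q1 p2 q2 pos ↔ 0 ≤ (coords p1 q1 p2 q2 pos).1 ∧ 0 ≤ (coords p1 q1 p2 q2 pos).2 := by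
  simp only [inBQ, coords, sub_nonneg]
  norm_cast
  exact and_comm

lemma det_mul_fst (pos : ℕ × ℕ) :
    det p1 q1 p2 q2 * pos.1 =
      (coords p1 q1 p2 q2 pos).1 * p1 + (coords p1 q1 p2 q2 pos).2 * p2 := by
  simp only [det, coords]; ring

lemma det_mul_snd (pos : ℕ × ℕ) :
    det p1 q1 p2 q2 * pos.2 =
      (coords p1 q1 p2 q2 pos).1 * q1 + (coords p1 q1 p2 q2 pos).2 * q2 := by
  simp only [det, coords]; ring

lemma coords_sub {A B s t : ℕ} (hA : p1 * s + p2 * t ≤ A) (hB : q1 * s + q2 * t ≤ B) :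
    coords p1 q1 p2 q2 (A - (p1 * s + p2 * t), B - (q1 * s + q2 * t)) =
      ((coords p1 q1 p2 q2 (A, B)).1 - s * det p1 q1 p2 q2,
        (coords p1 q1 p2 q2 (A, B)).2 - t * det p1 q1 p2 q2) := by
  simp only [coords, det, Nat.cast_sub hA, Nat.cast_sub hB]
  push_cast
  ext <;> ring

lemma heaps_sub (hD : q1 * p2 < p1 * q2) {A B s t : ℕ} (hA : p1 * s + p2 * t ≤ A)
    (hB : q1 * s + q2 * t ≤ B) :
    heaps p1 q1 p2 q2 (A - (p1 * s + p2 * t), B - (q1 * s + q2 * t)) =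
      ((heaps p1 q1 p2 q2 (A, B)).1 - s, (heaps p1 q1 p2 q2 (A, B)).2 - t) := by
  have hdet := (det_pos hD).ne'
  simp only [heaps, coords_sub hA hB, Int.sub_mul_ediv_right _ _ hdet]

lemma sum_lt_of_qMove (hp1 : 0 < p1) (hq2 : 0 < q2) {x y : ℕ × ℕ}
    (h : QMove p1 q1 p2 q2 MRN x y) : y.1 + y.2 < x.1 + x.2 := by
  obtain ⟨s, t, ⟨r, hr, hst⟩, hA, hB, hy1, hy2, -⟩ := h
  have : 0 < p1 * s + q2 * t := by
    rcases hst with h | h <;> simp only [Prod.mk.injEq] at h <;> obtain ⟨rfl, rfl⟩ := h <;>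
      positivity
  omega

lemma exists_heaps_of_qMove (hD : q1 * p2 < p1 * q2) {x y : ℕ × ℕ}
    (h : QMove p1 q1 p2 q2 MRN x y) :
    ∃ s t, (s, t) ∈ MRN ∧
      heaps p1 q1 p2 q2 y = ((heaps p1 q1 p2 q2 x).1 - s, (heaps p1 q1 p2 q2 x).2 - t) := by
  obtain ⟨s, t, hst, hA, hB, hy1, hy2, -⟩ := h
  refine ⟨s, t, hst, ?_⟩
  rw [show y = (x.1 - (p1 * s + p2 * t), x.2 - (q1 * s + q2 * t)) from Prod.ext hy1 hy2]
  exact heaps_sub hD hA hB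

lemma le_of_le_coords (hD : q1 * p2 < p1 * q2) {A B s t : ℕ}
    (hx : inBQ p1 q1 p2 q2 (A, B))
    (hs : s * det p1 q1 p2 q2 ≤ (coords p1 q1 p2 q2 (A, B)).1)
    (ht : t * det p1 q1 p2 q2 ≤ (coords p1 q1 p2 q2 (A, B)).2) :
    p1 * s + p2 * t ≤ A ∧ q1 * s + q2 * t ≤ B := by
  have hdet := det_pos hD
  obtain ⟨hu, hv⟩ := (inBQ_iff_coords_nonneg _).mp hx
  have hA := det_mul_fst (p1 := p1) (q1 := q1) (p2 := p2) (q2 := q2) (A, B)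
  have hB := det_mul_snd (p1 := p1) (q1 := q1) (p2 := p2) (q2 := q2) (A, B)
  constructor
  · refine Int.ofNat_le.mp (le_of_mul_le_mul_left ?_ hdet)
    push_cast; nlinarith
  · refine Int.ofNat_le.mp (le_of_mul_le_mul_left ?_ hdet)
    push_cast; nlinarith

lemma qMove_of_le_coords (hD : q1 * p2 < p1 * q2) {A B s t : ℕ}
    (hx : inBQ p1 q1 p2 q2 (A, B)) (hst : (s, t) ∈ MRN)
    (hs : s * det p1 q1 p2 q2 ≤ (coords p1 q1 p2 q2 (A, B)).1)
    (ht : t * det p1 q1 p2 q2 ≤ (coords p1 q1 p2 q2 (A, B)).2) :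
    QMove p1 q1 p2 q2 MRN (A, B) (A - (p1 * s + p2 * t), B - (q1 * s + q2 * t)) := by
  obtain ⟨hA, hB⟩ := le_of_le_coords hD hx hs ht
  refine ⟨s, t, hst, hA, hB, rfl, rfl, ?_⟩
  rw [inBQ_iff_coords_nonneg, coords_sub hA hB]
  exact ⟨sub_nonneg.mpr hs, sub_nonneg.mpr ht⟩

lemma heaps_ne_of_qMove (hD : q1 * p2 < p1 * q2) {x y : ℕ × ℕ}
    (hx : (heaps p1 q1 p2 q2 x).1 = (heaps p1 q1 p2 q2 x).2) (h : QMove p1 q1 p2 q2 MRN x y) :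
    (heaps p1 q1 p2 q2 y).1 ≠ (heaps p1 q1 p2 q2 y).2 := by
  obtain ⟨s, t, ⟨r, hr, hst⟩, hy⟩ := exists_heaps_of_qMove hD h
  rw [hy, hx]
  rcases hst with h | h <;> simp only [Prod.mk.injEq] at h <;> obtain ⟨rfl, rfl⟩ := h <;> omega

lemma exists_qMove_heaps_eq (hp1 : 0 < p1) (hq2 : 0 < q2) (hD : q1 * p2 < p1 * q2)
    {x : ℕ × ℕ} (hx : inBQ p1 q1 p2 q2 x)
    (hne : (heaps p1 q1 p2 q2 x).1 ≠ (heaps p1 q1 p2 q2 x).2) :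
    ∃ y, QMove p1 q1 p2 q2 MRN x y ∧ y.1 + y.2 < x.1 + x.2 ∧
      (heaps p1 q1 p2 q2 y).1 = (heaps p1 q1 p2 q2 y).2 := by
  obtain ⟨A, B⟩ := x
  have hdet := det_pos hD
  obtain ⟨hu, hv⟩ := (inBQ_iff_coords_nonneg _).mp hx
  have hu' : (heaps p1 q1 p2 q2 (A, B)).1 * det p1 q1 p2 q2 ≤ (coords p1 q1 p2 q2 (A, B)).1 :=
    Int.ediv_mul_le _ hdet.ne'
  have hv' : (heaps p1 q1 p2 q2 (A, B)).2 * det p1 q1 p2 q2 ≤ (coords p1 q1 p2 q2 (A, B)).2 :=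
    Int.ediv_mul_le _ hdet.ne'
  have hu0 : 0 ≤ (heaps p1 q1 p2 q2 (A, B)).1 := Int.ediv_nonneg hu hdet.le
  have hv0 : 0 ≤ (heaps p1 q1 p2 q2 (A, B)).2 := Int.ediv_nonneg hv hdet.le
  obtain ⟨s, t, hst, hs, ht, hbal⟩ : ∃ s t : ℕ, (s, t) ∈ MRN ∧
      (s : ℤ) ≤ (heaps p1 q1 p2 q2 (A, B)).1 ∧ (t : ℤ) ≤ (heaps p1 q1 p2 q2 (A, B)).2 ∧
      (heaps p1 q1 p2 q2 (A, B)).1 - s = (heaps p1 q1 p2 q2 (A, B)).2 - t := by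
    rcases lt_or_gt_of_ne hne with hlt | hlt
    · lift (heaps p1 q1 p2 q2 (A, B)).2 - (heaps p1 q1 p2 q2 (A, B)).1 to ℕ using by omega
        with t ht
      exact ⟨0, t, ⟨t, by omega, Or.inl rfl⟩, by omega, by omega, by omega⟩
    · lift (heaps p1 q1 p2 q2 (A, B)).1 - (heaps p1 q1 p2 q2 (A, B)).2 to ℕ using by omega
        with s hs
      exact ⟨s, 0, ⟨s, by omega, Or.inr rfl⟩, by omega, by omega, by omega⟩
  have hs' := le_trans (mul_le_mul_of_nonneg_right hs hdet.le) hu'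
  have ht' := le_trans (mul_le_mul_of_nonneg_right ht hdet.le) hv'
  have hmove := qMove_of_le_coords hD hx hst hs' ht'
  obtain ⟨hA, hB⟩ := le_of_le_coords hD hx hs' ht'
  refine ⟨_, hmove, sum_lt_of_qMove hp1 hq2 hmove, ?_⟩
  rwa [heaps_sub hD hA hB]

theorem pPos_iff_heaps_eq (hp1 : 0 < p1) (hq2 : 0 < q2) (hD : q1 * p2 < p1 * q2)
    {x : ℕ × ℕ} (hx : inBQ p1 q1 p2 q2 x) :
    PPos (QMove p1 q1 p2 q2 MRN) x ↔ (heaps p1 q1 p2 q2 x).1 = (heaps p1 q1 p2 q2 x).2 :=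
  pPos_iff_of_kernel (S := {x | inBQ p1 q1 p2 q2 x})
    (fun _ _ _ ⟨_, _, _, _, _, _, _, hy⟩ _ => hy)
    (fun _ _ hx _ h _ => heaps_ne_of_qMove hD hx h)
    (fun _ hx hne => exists_qMove_heaps_eq hp1 hq2 hD hx hne) x hx

lemma abs_cross_lt_det_of_pPos (hp1 : 0 < p1) (hq2 : 0 < q2) (hD : q1 * p2 < p1 * q2) {A B : ℕ}
    (hx : inBQ p1 q1 p2 q2 (A, B)) (hP : PPos (QMove p1 q1 p2 q2 MRN) (A, B)) :
    |(B : ℤ) * (p1 + p2) - A * (q1 + q2)| < det p1 q1 p2 q2 := by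
  have h := Int.abs_sub_lt_of_ediv_eq (det_pos hD) ((pPos_iff_heaps_eq hp1 hq2 hD hx).mp hP).symm
  convert h using 2
  simp only [coords]
  ring

end RationalNim

theorem stmt_12 (p1 q1 p2 q2 : ℕ) (hp1 : 0 < p1) (hq2 : 0 < q2)
    (hD : q1 * p2 < p1 * q2) (ε : ℝ) (hε : 0 < ε) :
    ∃ N : ℕ, ∀ A B : ℕ, inBQ p1 q1 p2 q2 (A, B) →
      PPos (QMove p1 q1 p2 q2 MRN) (A, B) → N ≤ A →
      |(B : ℝ) / (A : ℝ) - ((q1 : ℝ) + (q2 : ℝ)) / ((p1 : ℝ) + (p2 : ℝ))| < ε := by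
  have hp : (0 : ℝ) < p1 + p2 :=
    add_pos_of_pos_of_nonneg (Nat.cast_pos.mpr hp1) (Nat.cast_nonneg _)
  obtain ⟨N, hN⟩ := exists_nat_gt ((RationalNim.det p1 q1 p2 q2 : ℝ) / (ε * (p1 + p2)))
  refine ⟨N, fun A B hx hP hA => abs_div_sub_div_lt hp hε ?_ (hN.trans_le (by exact_mod_cast hA))⟩
  exact_mod_cast (RationalNim.abs_cross_lt_det_of_pPos hp1 hq2 hD hx hP).le
end

section
/- Along the lower P-positions of Rational Wythoff Nim the heap-size ratio converges to (q₁ + φ(q₁+q₂))/(p₁ + φ(p₁+p₂)): for every ε > 0 there exists N such that every P-position (A,B) of Rational Wythoff Nim with A ≥ N and B/A < (q₁+q₂)/(p₁+p₂) satisfies |B/A − (q₁ + φ(q₁+q₂))/(p₁ + φ(p₁+p₂))| < ε, where φ := (1+√5)/2. -/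
/-- The move set of Rational Wythoff Nim. -/
def MRW : Set (ℕ × ℕ) := {m | ∃ t : ℕ, 1 ≤ t ∧ (m = (0, t) ∨ m = (t, 0) ∨ m = (t, t))}

/-- The golden ratio `φ = (1+√5)/2`. -/
noncomputable def phi : ℝ := (1 + Real.sqrt 5) / 2

open Real

theorem pPos_iff {move : ℕ × ℕ → ℕ × ℕ → Prop} {p : ℕ × ℕ} :
    PPos move p ↔ ∀ q, move p q → q.1 + q.2 < p.1 + p.2 → ¬ PPos move q := by
  rw [PPos]

theorem pPos_iff_mem_of_stable_of_absorbing {move : ℕ × ℕ → ℕ × ℕ → Prop}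
    {Dom S : Set (ℕ × ℕ)}
    (hDom : ∀ p q, p ∈ Dom → move p q → q ∈ Dom)
    (hlt : ∀ p q, p ∈ Dom → move p q → q.1 + q.2 < p.1 + p.2)
    (hstable : ∀ p q, p ∈ Dom → p ∈ S → move p q → q ∉ S)
    (habsorb : ∀ p ∈ Dom, p ∉ S → ∃ q ∈ S, move p q) :
    ∀ p ∈ Dom, PPos move p ↔ p ∈ S := by
  intro p
  induction h : p.1 + p.2 using Nat.strong_induction_on generalizing p with
  | _ n ih =>
  intro hp
  rw [pPos_iff]
  constructor
  · intro hP
    by_contra hS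
    obtain ⟨q, hqS, hpq⟩ := habsorb p hp hS
    have hsum := hlt p q hp hpq
    exact hP q hpq hsum ((ih _ (h ▸ hsum) q rfl (hDom p q hp hpq)).2 hqS)
  · intro hS q hpq hsum hq
    exact hstable p q hp hS hpq ((ih _ (h ▸ hsum) q rfl (hDom p q hp hpq)).1 hq)

/-- `SubMove MRW` is ordinary Wythoff Nim. -/
def SubMove (M : Set (ℕ × ℕ)) (p q : ℕ × ℕ) : Prop := ∃ m ∈ M, q + m = p

theorem SubMove.add_lt {M : Set (ℕ × ℕ)} (hM : (0, 0) ∉ M) {p q : ℕ × ℕ}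
    (h : SubMove M p q) : q.1 + q.2 < p.1 + p.2 := by
  obtain ⟨⟨s, t⟩, hm, rfl⟩ := h
  have : s ≠ 0 ∨ t ≠ 0 := by
    by_contra! h
    obtain ⟨rfl, rfl⟩ := h
    exact hM hm
  simp only [Prod.fst_add, Prod.snd_add]
  omega

theorem zero_notMem_MRW : ((0, 0) : ℕ × ℕ) ∉ MRW := by
  rintro ⟨t, ht, h | h | h⟩ <;> simp only [Prod.mk.injEq] at h <;> omega

theorem swap_mem_MRW {m : ℕ × ℕ} (hm : m ∈ MRW) : m.swap ∈ MRW := by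
  obtain ⟨t, ht, rfl | rfl | rfl⟩ := hm
  exacts [⟨t, ht, .inr (.inl rfl)⟩, ⟨t, ht, .inl rfl⟩, ⟨t, ht, .inr (.inr rfl)⟩]

theorem SubMove.swap {M : Set (ℕ × ℕ)} (hM : ∀ m ∈ M, m.swap ∈ M) {p q : ℕ × ℕ}
    (h : SubMove M p q) : SubMove M p.swap q.swap := by
  obtain ⟨m, hm, rfl⟩ := h
  exact ⟨m.swap, hM m hm, rfl⟩

noncomputable def wythoffA (k : ℕ) : ℕ := ⌊k * goldenRatio⌋₊

noncomputable def wythoffB (k : ℕ) : ℕ := wythoffA k + k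

theorem wythoffA_le (k : ℕ) : (wythoffA k : ℝ) ≤ k * goldenRatio :=
  Nat.floor_le (by positivity)

theorem lt_wythoffA_add_one (k : ℕ) : k * goldenRatio < wythoffA k + 1 :=
  Nat.lt_floor_add_one _

@[simp]
theorem wythoffA_zero : wythoffA 0 = 0 := by
  simp [wythoffA]

theorem wythoffA_strictMono : StrictMono wythoffA := by
  refine strictMono_nat_of_lt_succ fun k => ?_
  have h1 := wythoffA_le k
  have h2 := lt_wythoffA_add_one (k + 1)
  have : (wythoffA k : ℝ) < wythoffA (k + 1) := by
    push_cast at h2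
    linarith [one_lt_goldenRatio]
  exact_mod_cast this

theorem wythoffB_strictMono : StrictMono wythoffB :=
  wythoffA_strictMono.add strictMono_id

theorem goldenRatio_holderConjugate : goldenRatio.HolderConjugate (goldenRatio ^ 2) := by
  rw [holderConjugate_iff]
  refine ⟨one_lt_goldenRatio, ?_⟩
  rw [← inv_pow, inv_goldenRatio, neg_sq, goldenConj_sq]
  ring

theorem beattySeq_goldenRatio (k : ℕ) : beattySeq goldenRatio k = wythoffA k := by
  rw [beattySeq, wythoffA, Int.cast_natCast, Int.natCast_floor_eq_floor (by positivity)]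

theorem beattySeq_goldenRatio_sq (k : ℕ) : beattySeq (goldenRatio ^ 2) k = wythoffB k := by
  have h := beattySeq_goldenRatio k
  rw [beattySeq, Int.cast_natCast] at h ⊢
  rw [goldenRatio_sq, mul_add_one, Int.floor_add_natCast, h, wythoffB, Nat.cast_add]

/-- Rayleigh's theorem for `φ` and `φ²`. -/
theorem exists_wythoffA_eq_iff_not_exists_wythoffB_eq {n : ℕ} (hn : 0 < n) :
    (∃ k, 0 < k ∧ wythoffA k = n) ↔ ¬ ∃ k, 0 < k ∧ wythoffB k = n := by
  have hpos {f : ℕ → ℕ} {g : ℤ → ℤ} (hfg : ∀ k : ℕ, g k = f k) :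
      (n : ℤ) ∈ {g k | k > 0} ↔ ∃ k, 0 < k ∧ f k = n := by
    constructor
    · rintro ⟨k, hk, hkn⟩
      lift k to ℕ using hk.le
      exact ⟨k, by exact_mod_cast hk, by rw [hfg] at hkn; exact_mod_cast hkn⟩
    · rintro ⟨k, hk, hkn⟩
      exact ⟨k, by exact_mod_cast hk, by rw [hfg, hkn]⟩
  have h := Set.ext_iff.1 (goldenRatio_irrational.beattySeq_symmDiff_beattySeq_pos
    goldenRatio_holderConjugate) n
  simp only [Set.mem_symmDiff, Set.mem_ofPred_eq, Nat.cast_pos, hn, iff_true,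
    hpos beattySeq_goldenRatio, hpos beattySeq_goldenRatio_sq] at h
  exact xor_iff_iff_not.1 h

theorem exists_wythoffA_eq_or_wythoffB_eq (n : ℕ) : ∃ k, wythoffA k = n ∨ wythoffB k = n := by
  rcases Nat.eq_zero_or_pos n with rfl | hn
  · exact ⟨0, .inl wythoffA_zero⟩
  by_cases hB : ∃ k, 0 < k ∧ wythoffB k = n
  · obtain ⟨k, -, hk⟩ := hB
    exact ⟨k, .inr hk⟩
  · obtain ⟨k, -, hk⟩ := (exists_wythoffA_eq_iff_not_exists_wythoffB_eq hn).2 hB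
    exact ⟨k, .inl hk⟩

theorem eq_zero_of_wythoffA_eq_wythoffB {k j : ℕ} (h : wythoffA k = wythoffB j) :
    k = 0 ∧ j = 0 := by
  rcases Nat.eq_zero_or_pos k with rfl | hk
  · simp only [wythoffA_zero, wythoffB] at h
    omega
  rcases Nat.eq_zero_or_pos j with rfl | hj
  · simp only [wythoffB, wythoffA_zero, add_zero] at h
    exact ⟨wythoffA_strictMono.injective (h.trans wythoffA_zero.symm), rfl⟩
  have hpos : 0 < wythoffA k := by simpa using wythoffA_strictMono hk
  exact absurd ⟨j, hj, h.symm⟩ ((exists_wythoffA_eq_iff_not_exists_wythoffB_eq hpos).1 ⟨k, hk, rfl⟩)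

def wythoffPairs : Set (ℕ × ℕ) :=
  {p | ∃ k, p = (wythoffA k, wythoffB k) ∨ p = (wythoffB k, wythoffA k)}

theorem swap_mem_wythoffPairs {p : ℕ × ℕ} (hp : p ∈ wythoffPairs) : p.swap ∈ wythoffPairs := by
  obtain ⟨k, rfl | rfl⟩ := hp
  exacts [⟨k, .inr rfl⟩, ⟨k, .inl rfl⟩]

theorem exists_eq_of_mem_wythoffPairs_of_snd_le {p : ℕ × ℕ} (hp : p ∈ wythoffPairs)
    (h : p.2 ≤ p.1) : ∃ k, p = (wythoffB k, wythoffA k) := by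
  obtain ⟨k, rfl | rfl⟩ := hp
  · obtain rfl : k = 0 := by simp only [wythoffB] at h; omega
    exact ⟨0, by simp [wythoffB]⟩
  · exact ⟨k, rfl⟩

theorem eq_of_mem_wythoffPairs_of_fst_eq {p q : ℕ × ℕ} (hp : p ∈ wythoffPairs)
    (hq : q ∈ wythoffPairs) (h : p.1 = q.1) : p = q := by
  obtain ⟨k, rfl | rfl⟩ := hp <;> obtain ⟨j, rfl | rfl⟩ := hq <;> dsimp only at h
  · rw [wythoffA_strictMono.injective h]
  · obtain ⟨rfl, rfl⟩ := eq_zero_of_wythoffA_eq_wythoffB h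
    rfl
  · obtain ⟨rfl, rfl⟩ := eq_zero_of_wythoffA_eq_wythoffB h.symm
    rfl
  · rw [wythoffB_strictMono.injective h]

theorem eq_of_mem_wythoffPairs_of_snd_eq {p q : ℕ × ℕ} (hp : p ∈ wythoffPairs)
    (hq : q ∈ wythoffPairs) (h : p.2 = q.2) : p = q :=
  Prod.swap_injective <|
    eq_of_mem_wythoffPairs_of_fst_eq (swap_mem_wythoffPairs hp) (swap_mem_wythoffPairs hq) h

theorem eq_of_mem_wythoffPairs_of_add_eq {p q : ℕ × ℕ} (hp : p ∈ wythoffPairs)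
    (hq : q ∈ wythoffPairs) (h : p.1 + q.2 = q.1 + p.2) : p = q := by
  obtain ⟨k, rfl | rfl⟩ := hp <;> obtain ⟨j, rfl | rfl⟩ := hq <;>
    simp only [wythoffB] at h ⊢
  · obtain rfl : k = j := by omega
    rfl
  · obtain ⟨rfl, rfl⟩ : k = 0 ∧ j = 0 := by omega
    rfl
  · obtain ⟨rfl, rfl⟩ : k = 0 ∧ j = 0 := by omega
    rfl
  · obtain rfl : k = j := by omega
    rfl

theorem not_subMove_MRW_of_mem_wythoffPairs {p q : ℕ × ℕ} (hp : p ∈ wythoffPairs)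
    (hq : q ∈ wythoffPairs) : ¬ SubMove MRW p q := by
  rintro ⟨m, hm, rfl⟩
  have hfix : q = q + m := by
    obtain ⟨t, -, rfl | rfl | rfl⟩ := hm
    · exact eq_of_mem_wythoffPairs_of_fst_eq hq hp (add_zero q.1).symm
    · exact eq_of_mem_wythoffPairs_of_snd_eq hq hp (add_zero q.2).symm
    · refine eq_of_mem_wythoffPairs_of_add_eq hq hp ?_
      simp only [Prod.fst_add, Prod.snd_add]
      omega
  exact (SubMove.add_lt zero_notMem_MRW ⟨m, hm, hfix.symm⟩).false

theorem exists_mem_wythoffPairs_subMove_MRW_of_le {x y : ℕ} (hxy : x ≤ y)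
    (hp : (x, y) ∉ wythoffPairs) : ∃ q ∈ wythoffPairs, SubMove MRW (x, y) q := by
  -- The pair indexed by `y - x` has the same difference as `(x, y)`: reach it diagonally if
  -- `x` is larger; if `x` is smaller, `x` is itself a coordinate of a pair, reached vertically.
  rcases lt_trichotomy x (wythoffA (y - x)) with hlt | heq | hgt
  · obtain ⟨k, rfl | rfl⟩ := exists_wythoffA_eq_or_wythoffB_eq x
    · have hk : k < y - wythoffA k := wythoffA_strictMono.lt_iff_lt.1 hlt
      refine ⟨_, ⟨k, .inl rfl⟩, (0, y - wythoffB k), ⟨y - wythoffB k, ?_, .inl rfl⟩, ?_⟩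
      · simp only [wythoffB]
        omega
      · ext <;> simp only [Prod.fst_add, Prod.snd_add, wythoffB] <;> omega
    · have hk : wythoffA k < y := by
        by_contra! hy
        obtain rfl : k = 0 := by simp only [wythoffB] at hxy; omega
        obtain rfl : y = 0 := by simp only [wythoffB, wythoffA_zero] at hxy hy; omega
        exact hp ⟨0, .inr (by simp [wythoffB])⟩
      refine ⟨_, ⟨k, .inr rfl⟩, (0, y - wythoffA k), ⟨y - wythoffA k, by omega, .inl rfl⟩, ?_⟩
      ext <;> simp only [Prod.fst_add, Prod.snd_add] <;> omega
  · refine absurd ⟨y - x, .inl ?_⟩ hp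
    ext <;> simp only [wythoffB] <;> omega
  · refine ⟨_, ⟨y - x, .inl rfl⟩, (x - wythoffA (y - x), x - wythoffA (y - x)),
      ⟨x - wythoffA (y - x), by omega, .inr (.inr rfl)⟩, ?_⟩
    ext <;> simp only [Prod.fst_add, Prod.snd_add, wythoffB] <;> omega

theorem exists_mem_wythoffPairs_subMove_MRW {p : ℕ × ℕ} (hp : p ∉ wythoffPairs) :
    ∃ q ∈ wythoffPairs, SubMove MRW p q := by
  obtain ⟨x, y⟩ := p
  rcases le_total x y with hxy | hyx
  · exact exists_mem_wythoffPairs_subMove_MRW_of_le hxy hp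
  · obtain ⟨q, hq, hmove⟩ :=
      exists_mem_wythoffPairs_subMove_MRW_of_le hyx fun h => hp (swap_mem_wythoffPairs h)
    exact ⟨q.swap, swap_mem_wythoffPairs hq, hmove.swap fun _ => swap_mem_MRW⟩

/-- Wythoff's theorem. -/
theorem pPos_subMove_MRW_iff (p : ℕ × ℕ) : PPos (SubMove MRW) p ↔ p ∈ wythoffPairs :=
  pPos_iff_mem_of_stable_of_absorbing (Dom := Set.univ) (fun _ _ _ _ => trivial)
    (fun _ _ _ => SubMove.add_lt zero_notMem_MRW)
    (fun _ _ _ hp hpq hq => not_subMove_MRW_of_mem_wythoffPairs hp hq hpq)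
    (fun _ _ hp => exists_mem_wythoffPairs_subMove_MRW hp) p trivial

def det2 (a b : ℕ × ℕ) : ℤ := a.1 * b.2 - a.2 * b.1

section QGame

variable {p1 q1 p2 q2 : ℕ} {M : Set (ℕ × ℕ)}

/-- The floors of the coordinates of `pos` in the basis `(p1, q1)`, `(p2, q2)` (Cramer's rule). -/
def wythoffCoord (p1 q1 p2 q2 : ℕ) (pos : ℕ × ℕ) : ℕ × ℕ :=
  ((det2 pos (p2, q2) / det2 (p1, q1) (p2, q2)).toNat,
    (det2 (p1, q1) pos / det2 (p1, q1) (p2, q2)).toNat)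

theorem det2_pos (hD : q1 * p2 < p1 * q2) : 0 < det2 (p1, q1) (p2, q2) := by
  simp only [det2, sub_pos]
  exact_mod_cast hD

theorem inBQ_iff_det2_nonneg {pos : ℕ × ℕ} :
    inBQ p1 q1 p2 q2 pos ↔ 0 ≤ det2 (p1, q1) pos ∧ 0 ≤ det2 pos (p2, q2) := by
  simp only [inBQ, det2, sub_nonneg]
  norm_cast
  rw [mul_comm q1, mul_comm p1]

theorem det2_mul_fst (pos : ℕ × ℕ) :
    det2 (p1, q1) (p2, q2) * pos.1 = p1 * det2 pos (p2, q2) + p2 * det2 (p1, q1) pos := by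
  simp only [det2]
  ring

theorem det2_mul_snd (pos : ℕ × ℕ) :
    det2 (p1, q1) (p2, q2) * pos.2 = q1 * det2 pos (p2, q2) + q2 * det2 (p1, q1) pos := by
  simp only [det2]
  ring

theorem det2_eq_of_add {p q : ℕ × ℕ} {s t : ℕ} (h1 : q.1 + (p1 * s + p2 * t) = p.1)
    (h2 : q.2 + (q1 * s + q2 * t) = p.2) :
    det2 p (p2, q2) = det2 q (p2, q2) + det2 (p1, q1) (p2, q2) * s ∧
      det2 (p1, q1) p = det2 (p1, q1) q + det2 (p1, q1) (p2, q2) * t := by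
  simp only [det2, ← h1, ← h2]
  push_cast
  constructor <;> ring

theorem add_le_of_mul_le_det2 (hD : q1 * p2 < p1 * q2) {p : ℕ × ℕ} {s t : ℕ}
    (hs : det2 (p1, q1) (p2, q2) * s ≤ det2 p (p2, q2))
    (ht : det2 (p1, q1) (p2, q2) * t ≤ det2 (p1, q1) p) :
    p1 * s + p2 * t ≤ p.1 ∧ q1 * s + q2 * t ≤ p.2 := by
  have hD0 := det2_pos hD
  have h1 := mul_le_mul_of_nonneg_left hs (Int.natCast_nonneg p1)
  have h2 := mul_le_mul_of_nonneg_left ht (Int.natCast_nonneg p2)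
  have h3 := mul_le_mul_of_nonneg_left hs (Int.natCast_nonneg q1)
  have h4 := mul_le_mul_of_nonneg_left ht (Int.natCast_nonneg q2)
  have hfst := det2_mul_fst (p1 := p1) (q1 := q1) (p2 := p2) (q2 := q2) p
  have hsnd := det2_mul_snd (p1 := p1) (q1 := q1) (p2 := p2) (q2 := q2) p
  constructor
  · have : det2 (p1, q1) (p2, q2) * ((p1 * s + p2 * t : ℕ) : ℤ) ≤ det2 (p1, q1) (p2, q2) * p.1 := by
      push_cast
      linarith
    exact_mod_cast le_of_mul_le_mul_left this hD0
  · have : det2 (p1, q1) (p2, q2) * ((q1 * s + q2 * t : ℕ) : ℤ) ≤ det2 (p1, q1) (p2, q2) * p.2 := by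
      push_cast
      linarith
    exact_mod_cast le_of_mul_le_mul_left this hD0

theorem QMove.add_lt (hp1 : 0 < p1) (hq2 : 0 < q2) (hM : (0, 0) ∉ M) {p q : ℕ × ℕ}
    (h : QMove p1 q1 p2 q2 M p q) : q.1 + q.2 < p.1 + p.2 := by
  obtain ⟨s, t, hst, hX, hY, h1, h2, -⟩ := h
  have : 0 < p1 * s + q2 * t := by
    rcases Nat.eq_zero_or_pos s with rfl | hs
    · rcases Nat.eq_zero_or_pos t with rfl | ht
      · exact absurd hst hM
      · have := Nat.mul_pos hq2 ht
        omega
    · have := Nat.mul_pos hp1 hs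
      omega
  omega

theorem subMove_wythoffCoord_of_qMove (hD : q1 * p2 < p1 * q2) {p q : ℕ × ℕ}
    (h : QMove p1 q1 p2 q2 M p q) :
    SubMove M (wythoffCoord p1 q1 p2 q2 p) (wythoffCoord p1 q1 p2 q2 q) := by
  obtain ⟨s, t, hst, hX, hY, h1, h2, hq⟩ := h
  have h1' : q.1 + (p1 * s + p2 * t) = p.1 := by omega
  have h2' : q.2 + (q1 * s + q2 * t) = p.2 := by omega
  obtain ⟨hu, hv⟩ := det2_eq_of_add h1' h2'
  obtain ⟨hv0, hu0⟩ := inBQ_iff_det2_nonneg.1 hq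
  have hD0 := det2_pos hD
  refine ⟨(s, t), hst, Prod.ext ?_ ?_⟩ <;>
    simp only [wythoffCoord, Prod.fst_add, Prod.snd_add, hu, hv, Int.add_mul_ediv_left _ _ hD0.ne']
  · have := Int.ediv_nonneg hu0 hD0.le
    omega
  · have := Int.ediv_nonneg hv0 hD0.le
    omega

theorem exists_qMove_of_subMove_wythoffCoord (hD : q1 * p2 < p1 * q2) {p w : ℕ × ℕ}
    (hp : inBQ p1 q1 p2 q2 p) (h : SubMove M (wythoffCoord p1 q1 p2 q2 p) w) :
    ∃ q, QMove p1 q1 p2 q2 M p q ∧ wythoffCoord p1 q1 p2 q2 q = w := by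
  obtain ⟨⟨s, t⟩, hst, hw⟩ := h
  obtain ⟨hv0, hu0⟩ := inBQ_iff_det2_nonneg.1 hp
  have hD0 := det2_pos hD
  have hw1 := congrArg Prod.fst hw
  have hw2 := congrArg Prod.snd hw
  simp only [wythoffCoord, Prod.fst_add, Prod.snd_add] at hw1 hw2
  have hs : det2 (p1, q1) (p2, q2) * s ≤ det2 p (p2, q2) := by
    rw [mul_comm, ← Int.le_ediv_iff_mul_le hD0]
    have := Int.ediv_nonneg hu0 hD0.le
    omega
  have ht : det2 (p1, q1) (p2, q2) * t ≤ det2 (p1, q1) p := by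
    rw [mul_comm, ← Int.le_ediv_iff_mul_le hD0]
    have := Int.ediv_nonneg hv0 hD0.le
    omega
  obtain ⟨hX, hY⟩ := add_le_of_mul_le_det2 hD hs ht
  set q : ℕ × ℕ := (p.1 - (p1 * s + p2 * t), p.2 - (q1 * s + q2 * t))
  have h1 : q.1 + (p1 * s + p2 * t) = p.1 := Nat.sub_add_cancel hX
  have h2 : q.2 + (q1 * s + q2 * t) = p.2 := Nat.sub_add_cancel hY
  obtain ⟨hu, hv⟩ := det2_eq_of_add h1 h2
  refine ⟨q, ⟨s, t, hst, hX, hY, rfl, rfl, inBQ_iff_det2_nonneg.2 ⟨by linarith, by linarith⟩⟩, ?_⟩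
  have hu0' := Int.ediv_nonneg (by linarith : 0 ≤ det2 q (p2, q2)) hD0.le
  have hv0' := Int.ediv_nonneg (by linarith : 0 ≤ det2 (p1, q1) q) hD0.le
  rw [hu, Int.add_mul_ediv_left _ _ hD0.ne'] at hw1
  rw [hv, Int.add_mul_ediv_left _ _ hD0.ne'] at hw2
  ext <;> simp only [wythoffCoord] <;> omega

theorem pPos_qMove_iff_pPos_subMove (hp1 : 0 < p1) (hq2 : 0 < q2) (hD : q1 * p2 < p1 * q2)
    (hM : (0, 0) ∉ M) {p : ℕ × ℕ} (hp : inBQ p1 q1 p2 q2 p) :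
    PPos (QMove p1 q1 p2 q2 M) p ↔ PPos (SubMove M) (wythoffCoord p1 q1 p2 q2 p) := by
  refine pPos_iff_mem_of_stable_of_absorbing (Dom := {p | inBQ p1 q1 p2 q2 p})
    (S := {p | PPos (SubMove M) (wythoffCoord p1 q1 p2 q2 p)})
    (fun _ _ _ ⟨_, _, _, _, _, _, _, hq⟩ => hq) (fun _ _ _ => QMove.add_lt hp1 hq2 hM)
    (fun _ _ _ hP hpq => ?_) (fun p hp hP => ?_) p hp
  · have hmove := subMove_wythoffCoord_of_qMove hD hpq
    exact pPos_iff.1 hP _ hmove (hmove.add_lt hM)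
  · change ¬ PPos _ _ at hP
    rw [pPos_iff] at hP
    simp only [not_forall, not_not] at hP
    obtain ⟨w, hmove, -, hw⟩ := hP
    obtain ⟨q, hpq, rfl⟩ := exists_qMove_of_subMove_wythoffCoord hD hp hmove
    exact ⟨q, hw, hpq⟩

theorem det2_lt_det2_of_div_lt (hp : 0 < p1 + p2) {A B : ℕ} (hA : 0 < A)
    (h : (B : ℝ) / A < ((q1 : ℝ) + q2) / (p1 + p2)) :
    det2 (p1, q1) (A, B) < det2 (A, B) (p2, q2) := by
  rw [div_lt_div_iff₀ (by exact_mod_cast hA) (by exact_mod_cast hp)] at h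
  have h' : (B * (p1 + p2) : ℤ) < (q1 + q2) * A := by exact_mod_cast h
  simp only [det2]
  linarith

theorem snd_wythoffCoord_le_fst (hD : q1 * p2 < p1 * q2) {p : ℕ × ℕ}
    (h : det2 (p1, q1) p ≤ det2 p (p2, q2)) :
    (wythoffCoord p1 q1 p2 q2 p).2 ≤ (wythoffCoord p1 q1 p2 q2 p).1 :=
  Int.toNat_le_toNat (Int.ediv_le_ediv (det2_pos hD) h)

end QGame

theorem abs_goldenRatio_mul_wythoffA_sub_wythoffB_lt_one (k : ℕ) :
    |goldenRatio * wythoffA k - wythoffB k| < 1 := by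
  have h1 := wythoffA_le k
  have h2 := lt_wythoffA_add_one k
  have key : goldenRatio * wythoffA k - wythoffB k =
      (goldenRatio - 1) * (wythoffA k - k * goldenRatio) := by
    push_cast [wythoffB]
    linear_combination (k : ℝ) * goldenRatio_sq
  have hfrac : |(wythoffA k : ℝ) - k * goldenRatio| < 1 := by
    rw [abs_lt]
    constructor <;> linarith
  rw [key, abs_mul, abs_of_pos (by linarith [one_lt_goldenRatio])]
  nlinarith [abs_nonneg ((wythoffA k : ℝ) - k * goldenRatio), goldenRatio_lt_two]

theorem abs_goldenRatio_mul_sub_lt {D u v : ℝ} {k : ℕ} (hD : 0 < D)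
    (hu : u - D * wythoffB k ∈ Set.Ico 0 D) (hv : v - D * wythoffA k ∈ Set.Ico 0 D) :
    |goldenRatio * v - u| < 3 * D := by
  obtain ⟨hu0, hu1⟩ := hu
  obtain ⟨hv0, hv1⟩ := hv
  obtain ⟨hk0, hk1⟩ := abs_lt.1 (abs_goldenRatio_mul_wythoffA_sub_wythoffB_lt_one k)
  have e : goldenRatio * v - u = D * (goldenRatio * wythoffA k - wythoffB k) +
      (goldenRatio * (v - D * wythoffA k) - (u - D * wythoffB k)) := by ring
  have h0 := mul_nonneg goldenRatio_pos.le hv0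
  have h1 : goldenRatio * (v - D * wythoffA k) < 2 * D := by
    nlinarith [goldenRatio_lt_two, goldenRatio_pos]
  rw [abs_lt, e]
  constructor <;> nlinarith

theorem div_sub_div_eq_of_cramer {a b u v p1 q1 p2 q2 r : ℝ} (hD : p1 * q2 - q1 * p2 ≠ 0)
    (ha : a ≠ 0) (hP : p1 + r * (p1 + p2) ≠ 0)
    (hA : (p1 * q2 - q1 * p2) * a = p1 * u + p2 * v)
    (hB : (p1 * q2 - q1 * p2) * b = q1 * u + q2 * v) :
    b / a - (q1 + r * (q1 + q2)) / (p1 + r * (p1 + p2)) =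
      ((1 + r) * v - r * u) / (a * (p1 + r * (p1 + p2))) := by
  rw [div_sub_div _ _ ha hP]
  congr 1
  apply mul_left_cancel₀ hD
  linear_combination (p1 + r * (p1 + p2)) * hB - (q1 + r * (q1 + q2)) * hA

theorem sub_mul_mem_Ico_of_toNat_ediv_eq {x D : ℤ} {n : ℕ} (hx : 0 ≤ x) (hD : 0 < D)
    (h : (x / D).toNat = n) : (x : ℝ) - D * n ∈ Set.Ico 0 (D : ℝ) := by
  have hn : x / D = n := by
    have := Int.ediv_nonneg hx hD.le
    omega
  have e := Int.emod_add_mul_ediv x D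
  have h0 := Int.emod_nonneg x hD.ne'
  have h1 := Int.emod_lt_of_pos x hD
  rw [hn] at e
  constructor
  · exact_mod_cast (by linarith : (0 : ℤ) ≤ x - D * n)
  · exact_mod_cast (by linarith : x - D * n < D)

theorem abs_div_sub_lt_of_wythoffCoord_eq {p1 q1 p2 q2 : ℕ} (hp1 : 0 < p1)
    (hD : q1 * p2 < p1 * q2) {A B k : ℕ} (hA : 0 < A) (hBQ : inBQ p1 q1 p2 q2 (A, B))
    (hk : wythoffCoord p1 q1 p2 q2 (A, B) = (wythoffB k, wythoffA k)) :
    |(B : ℝ) / A - ((q1 : ℝ) + goldenRatio * (q1 + q2)) / (p1 + goldenRatio * (p1 + p2))| <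
      6 * ((p1 : ℝ) * q2 - q1 * p2) / (A * (p1 + goldenRatio * (p1 + p2))) := by
  have hD0 := det2_pos hD
  have hDR : ((det2 (p1, q1) (p2, q2) : ℤ) : ℝ) = p1 * q2 - q1 * p2 := by
    simp [det2]
  obtain ⟨hv0, hu0⟩ := inBQ_iff_det2_nonneg.1 hBQ
  have hE := abs_goldenRatio_mul_sub_lt (by exact_mod_cast hD0)
    (sub_mul_mem_Ico_of_toNat_ediv_eq hu0 hD0 (congrArg Prod.fst hk))
    (sub_mul_mem_Ico_of_toNat_ediv_eq hv0 hD0 (congrArg Prod.snd hk))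
  rw [hDR] at hE
  have hA' : (0 : ℝ) < A := by exact_mod_cast hA
  have hP : (0 : ℝ) < p1 + goldenRatio * (p1 + p2) := by
    have : (0 : ℝ) < p1 := by exact_mod_cast hp1
    positivity
  have hfst : ((p1 : ℝ) * q2 - q1 * p2) * A =
      p1 * (det2 (A, B) (p2, q2) : ℝ) + p2 * (det2 (p1, q1) (A, B) : ℝ) := by
    rw [← hDR]
    exact_mod_cast det2_mul_fst (A, B)
  have hsnd : ((p1 : ℝ) * q2 - q1 * p2) * B =
      q1 * (det2 (A, B) (p2, q2) : ℝ) + q2 * (det2 (p1, q1) (A, B) : ℝ) := by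
    rw [← hDR]
    exact_mod_cast det2_mul_snd (A, B)
  rw [div_sub_div_eq_of_cramer (by rw [← hDR]; exact_mod_cast hD0.ne') hA'.ne' hP.ne' hfst hsnd,
    abs_div, abs_of_pos (mul_pos hA' hP), div_lt_div_iff_of_pos_right (mul_pos hA' hP)]
  have e : (1 + goldenRatio) * (det2 (p1, q1) (A, B) : ℝ) - goldenRatio * det2 (A, B) (p2, q2) =
      goldenRatio * (goldenRatio * det2 (p1, q1) (A, B) - det2 (A, B) (p2, q2)) := by
    linear_combination -(det2 (p1, q1) (A, B) : ℝ) * goldenRatio_sq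
  rw [e, abs_mul, abs_of_pos goldenRatio_pos]
  nlinarith [goldenRatio_lt_two, abs_nonneg
    (goldenRatio * (det2 (p1, q1) (A, B) : ℝ) - det2 (A, B) (p2, q2))]

theorem stmt_13 (p1 q1 p2 q2 : ℕ) (hp1 : 0 < p1) (hq2 : 0 < q2)
    (hD : q1 * p2 < p1 * q2) (ε : ℝ) (hε : 0 < ε) :
    ∃ N : ℕ, ∀ A B : ℕ, inBQ p1 q1 p2 q2 (A, B) →
      PPos (QMove p1 q1 p2 q2 MRW) (A, B) → N ≤ A →
      (B : ℝ) / (A : ℝ) < ((q1 : ℝ) + (q2 : ℝ)) / ((p1 : ℝ) + (p2 : ℝ)) →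
      |(B : ℝ) / (A : ℝ) -
          ((q1 : ℝ) + phi * ((q1 : ℝ) + (q2 : ℝ))) /
            ((p1 : ℝ) + phi * ((p1 : ℝ) + (p2 : ℝ)))| < ε := by
  rw [show phi = goldenRatio from rfl]
  have hP : (0 : ℝ) < p1 + goldenRatio * (p1 + p2) := by
    have : (0 : ℝ) < p1 := by exact_mod_cast hp1
    positivity
  obtain ⟨N, hN⟩ :=
    exists_nat_gt (6 * ((p1 : ℝ) * q2 - q1 * p2) / (ε * (p1 + goldenRatio * (p1 + p2))))
  refine ⟨N + 1, fun A B hBQ hPA hNA hlow => ?_⟩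
  have hA : 0 < A := by omega
  have hW := (pPos_subMove_MRW_iff _).1
    ((pPos_qMove_iff_pPos_subMove hp1 hq2 hD zero_notMem_MRW hBQ).1 hPA)
  obtain ⟨k, hk⟩ := exists_eq_of_mem_wythoffPairs_of_snd_le hW <|
    snd_wythoffCoord_le_fst hD (det2_lt_det2_of_div_lt (by omega) hA hlow).le
  have hNA' : (N : ℝ) < A := by exact_mod_cast (by omega : N < A)
  rw [div_lt_iff₀ (by positivity)] at hN
  calc _ < _ := abs_div_sub_lt_of_wythoffCoord_eq hp1 hD hA hBQ hk
    _ < ε := by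
      rw [div_lt_iff₀ (by positivity)]
      nlinarith [mul_lt_mul_of_pos_right hNA' (mul_pos hε hP)]
end
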